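/- For all 0 ≤ ℓ ≤ n, in the field of formal power series in t over Q(q): 1/Π_{i=0}^{n}(1 - t·q^{ri}) = Σ_{k=ℓ}^{n} (t·q^{rk})^{k-ℓ} · qbinom(n-ℓ, k-ℓ)_{q^r} / Π_{i=0}^{k}(1 - t·q^{ri}). -/
import Mathlib


open Finset

/-- The Gaussian binomial coefficient, as a polynomial expression in `q`. -/
def qbin {R : Type*} [CommRing R] (q : R) : ℕ → ℕ → R
  | 0, 0 => 1
  | 0, _ + 1 => 0
  | _ + 1, 0 => 1
  | n + 1, k + 1 => qbin q n k + q ^ (k + 1) * qbin q n (k + 1)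

/-- The field `ℚ(q)(t)` of rational functions in `t` over `ℚ(q)` (a subfield of the field of
formal Laurent series in `t` over `ℚ(q)`, in which both sides of the identity live). -/
noncomputable abbrev F : Type := RatFunc (RatFunc ℚ)

/-- The variable `q`. -/
noncomputable def qv : F := RatFunc.C RatFunc.X

/-- The variable `t`. -/
noncomputable def tv : F := RatFunc.X

lemma qbin_zero_right {R : Type*} [CommRing R] (q : R) (n : ℕ) : qbin q n 0 = 1 := by
  cases n <;> rfl

lemma qbin_eq_zero {R : Type*} [CommRing R] (q : R) : ∀ n k, n < k → qbin q n k = 0 := by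
  intro n
  induction n with
  | zero => intro k hk; cases k with
    | zero => omega
    | succ k => rfl
  | succ n ih =>
    intro k hk
    cases k with
    | zero => omega
    | succ k =>
      show qbin q n k + q ^ (k+1) * qbin q n (k+1) = 0
      rw [ih k (by omega), ih (k+1) (by omega)]
      ring

lemma key {R : Type*} [CommRing R] (Q : R) :
    ∀ (m : ℕ) (t : R),
      ∑ d ∈ range (m + 1), (t * Q ^ d) ^ d * qbin Q m d *
        ∏ i ∈ Ico (d + 1) (m + 1), (1 - t * Q ^ i) = 1 := by
  intro m
  induction m with
  | zero => intro t; simp [qbin]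
  | succ m ih =>
    intro t
    set A : ℕ → R := fun d => (t * Q ^ (d+1)) ^ (d+1) * qbin Q m d *
        ∏ i ∈ Ico (d + 2) (m + 2), (1 - t * Q ^ i) with hA
    set g : ℕ → R := fun e => (t * Q ^ e) ^ e * (Q ^ e * qbin Q m e) *
        ∏ i ∈ Ico (e + 1) (m + 2), (1 - t * Q ^ i) with hg
    rw [Finset.sum_range_succ']
    have hf : ∀ d ∈ range (m+1),
        (t * Q ^ (d+1)) ^ (d+1) * qbin Q (m+1) (d+1) *
          ∏ i ∈ Ico (d + 1 + 1) (m + 1 + 1), (1 - t * Q ^ i) = A d + g (d+1) := by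
      intro d _
      show (t * Q ^ (d+1)) ^ (d+1) * (qbin Q m d + Q ^ (d+1) * qbin Q m (d+1)) * _ = _
      simp only [hA, hg]
      have : d + 1 + 1 = d + 2 := rfl
      rw [this]
      ring
    rw [Finset.sum_congr rfl hf, Finset.sum_add_distrib]
    have hf0 : (t * Q ^ 0) ^ 0 * qbin Q (m+1) 0 * ∏ i ∈ Ico (0 + 1) (m + 1 + 1), (1 - t * Q ^ i)
        = g 0 := by
      simp [hg, qbin_zero_right]
    rw [hf0, add_assoc, ← Finset.sum_range_succ']
    have hgsum : ∑ e ∈ range (m + 2), g e = ∑ e ∈ range (m + 1), g e := by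
      rw [Finset.sum_range_succ]
      have : g (m+1) = 0 := by
        simp [hg, qbin_eq_zero Q m (m+1) (by omega)]
      rw [this, add_zero]
    rw [hgsum, ← Finset.sum_add_distrib]
    have hterm : ∀ e ∈ range (m+1), A e + g e =
        ((t * Q) * Q ^ e) ^ e * qbin Q m e * ∏ i ∈ Ico (e + 1) (m + 1), (1 - (t * Q) * Q ^ i) := by
      intro e he
      rw [mem_range] at he
      have hsplit : ∏ i ∈ Ico (e + 1) (m + 2), (1 - t * Q ^ i)
          = (1 - t * Q ^ (e+1)) * ∏ i ∈ Ico (e + 2) (m + 2), (1 - t * Q ^ i) :=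
        Finset.prod_eq_prod_Ico_succ_bot (by omega) _
      have hshift : ∏ i ∈ Ico (e + 1) (m + 1), (1 - (t * Q) * Q ^ i)
          = ∏ i ∈ Ico (e + 2) (m + 2), (1 - t * Q ^ i) := by
        rw [Finset.prod_Ico_eq_prod_range, Finset.prod_Ico_eq_prod_range]
        have hc : m + 1 - (e + 1) = m + 2 - (e + 2) := by omega
        rw [hc]
        refine Finset.prod_congr rfl fun i _ => ?_
        ring_nf
      simp only [hA, hg]
      rw [hsplit, hshift]
      ring
    rw [Finset.sum_congr rfl hterm]
    exact ih (t * Q)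
open Finset

lemma main {K : Type*} [Field K] (Q t : K) (n ℓ : ℕ) (h : ℓ ≤ n)
    (hne : ∀ i : ℕ, 1 - t * Q ^ i ≠ 0) :
    (∏ i ∈ Finset.range (n + 1), (1 - t * Q ^ i))⁻¹ =
      ∑ k ∈ Finset.Icc ℓ n,
        (t * Q ^ k) ^ (k - ℓ) * qbin Q (n - ℓ) (k - ℓ) /
          ∏ i ∈ Finset.range (k + 1), (1 - t * Q ^ i) := by
  have hP : ∀ s : Finset ℕ, (∏ i ∈ s, (1 - t * Q ^ i)) ≠ 0 :=
    fun s => Finset.prod_ne_zero_iff.mpr fun i _ => hne i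
  have step1 : ∀ k ∈ Finset.Icc ℓ n,
      (t * Q ^ k) ^ (k - ℓ) * qbin Q (n - ℓ) (k - ℓ) /
          ∏ i ∈ Finset.range (k + 1), (1 - t * Q ^ i)
      = ((t * Q ^ k) ^ (k - ℓ) * qbin Q (n - ℓ) (k - ℓ) *
          ∏ i ∈ Finset.Ico (k + 1) (n + 1), (1 - t * Q ^ i)) *
        (∏ i ∈ Finset.range (n + 1), (1 - t * Q ^ i))⁻¹ := by
    intro k hk
    rw [Finset.mem_Icc] at hk
    have hsplit : (∏ i ∈ Finset.range (k + 1), (1 - t * Q ^ i)) *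
        ∏ i ∈ Finset.Ico (k + 1) (n + 1), (1 - t * Q ^ i)
        = ∏ i ∈ Finset.range (n + 1), (1 - t * Q ^ i) :=
      Finset.prod_range_mul_prod_Ico _ (by omega)
    rw [← hsplit, ← div_eq_mul_inv, mul_div_mul_right _ _ (hP _)]
  rw [Finset.sum_congr rfl step1, ← Finset.sum_mul]
  have hsum : ∑ k ∈ Finset.Icc ℓ n,
      (t * Q ^ k) ^ (k - ℓ) * qbin Q (n - ℓ) (k - ℓ) *
        ∏ i ∈ Finset.Ico (k + 1) (n + 1), (1 - t * Q ^ i) = 1 := by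
    rw [← Finset.Ico_add_one_right_eq_Icc, Finset.sum_Ico_eq_sum_range]
    have hm : n + 1 - ℓ = (n - ℓ) + 1 := by omega
    rw [hm]
    have hterm : ∀ d ∈ Finset.range ((n - ℓ) + 1),
        (t * Q ^ (ℓ + d)) ^ (ℓ + d - ℓ) * qbin Q (n - ℓ) (ℓ + d - ℓ) *
          ∏ i ∈ Finset.Ico (ℓ + d + 1) (n + 1), (1 - t * Q ^ i)
        = ((t * Q ^ ℓ) * Q ^ d) ^ d * qbin Q (n - ℓ) d *
          ∏ i ∈ Finset.Ico (d + 1) ((n - ℓ) + 1), (1 - (t * Q ^ ℓ) * Q ^ i) := by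
      intro d hd
      rw [Finset.mem_range] at hd
      have h1 : ℓ + d - ℓ = d := by omega
      have h2 : ∏ i ∈ Finset.Ico (ℓ + d + 1) (n + 1), (1 - t * Q ^ i)
          = ∏ i ∈ Finset.Ico (d + 1) ((n - ℓ) + 1), (1 - (t * Q ^ ℓ) * Q ^ i) := by
        rw [Finset.prod_Ico_eq_prod_range, Finset.prod_Ico_eq_prod_range]
        have hc : n + 1 - (ℓ + d + 1) = n - ℓ + 1 - (d + 1) := by omega
        rw [hc]
        refine Finset.prod_congr rfl fun i _ => ?_
        rw [show ℓ + d + 1 + i = ℓ + (d + 1 + i) by ring, pow_add]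
        ring
      rw [h1, h2, pow_add]
      ring
    rw [Finset.sum_congr rfl hterm]
    exact key Q (n - ℓ) (t * Q ^ ℓ)
  rw [hsum, one_mul]
lemma aux_ne (c : RatFunc ℚ) : (1 : F) - tv * RatFunc.C c ≠ 0 := by
  have hp : (1 - Polynomial.X * Polynomial.C c : Polynomial (RatFunc ℚ)) ≠ 0 := by
    intro hcon
    have := congrArg (fun p => Polynomial.coeff p 0) hcon
    simp [Polynomial.mul_coeff_zero] at this
  have h1 : (1 : F) - tv * RatFunc.C c
      = algebraMap (Polynomial (RatFunc ℚ)) F (1 - Polynomial.X * Polynomial.C c) := by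
    simp only [map_sub, map_one, map_mul, RatFunc.algebraMap_X, RatFunc.algebraMap_C, tv]
  rw [h1]
  exact RatFunc.algebraMap_ne_zero hp

theorem stmt16 (r n ℓ : ℕ) (hr : 1 ≤ r) (h : ℓ ≤ n) :
    (∏ i ∈ Finset.range (n + 1), (1 - tv * qv ^ (r * i)))⁻¹ =
      ∑ k ∈ Finset.Icc ℓ n,
        (tv * qv ^ (r * k)) ^ (k - ℓ) * qbin (qv ^ r) (n - ℓ) (k - ℓ) /
          ∏ i ∈ Finset.range (k + 1), (1 - tv * qv ^ (r * i)) := by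
  have hne : ∀ i : ℕ, (1 : F) - tv * (qv ^ r) ^ i ≠ 0 := by
    intro i
    have hqc : (qv ^ r) ^ i = (RatFunc.C (RatFunc.X ^ (r * i)) : F) := by
      rw [← pow_mul]
      simp [qv, map_pow]
    rw [hqc]
    exact aux_ne _
  simp only [pow_mul]
  exact main (qv ^ r) tv n ℓ h hne
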